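/- Let q be a prime power, let G ∈ F_q^{k×n} be a matrix of rank k with columns g_1,…,g_n, and let s_1, s_2 ≥ 1 with s_1 + s_2 = k. If every column of G belongs to F_1 ∪ F_2 (i.e., each column lies entirely in one of the two file subspaces), then s_1/E_1(G) + s_2/E_2(G) ≤ 1. -/

import Mathlib

/-!
Let `A` be the set of columns lying in `F₁`; by hypothesis the remaining columns lie in `F₂`.
Since `F₁ ⊓ F₂ = ⊥`, a set `S` of columns spans `F₁` only if `S` contains at least
`s₁ = dim F₁` columns of `A` (modular law).

Weighting each `S` by `1 / C(n-1, |S|)`, the total weight is `n H_n`, so `E(G, V)` is at least the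
weight of the sets `S` whose span does not contain `V`. For `V = F₁` this includes every set with
fewer than `s₁` columns from `A`, and the weight of those sets is exactly
`∑_{t < s₁} n / (|A| - t) ≥ n s₁ / |A|` (`n` times the expected waiting time for the `s₁`-th of
`|A|` exponential clocks); the exact value comes from the reciprocal Pascal rule
`1 / C(N+1, k) + 1 / C(N+1, k+1) = (N+2) / ((N+1) C(N, k))`.
Hence `s₁ / E₁ ≤ |A| / n`, likewise `s₂ / E₂ ≤ |Aᶜ| / n`, and the two bounds add up to `1`.
-/

open Finset

/-- The `r`-th harmonic number `H_r = ∑_{i=1}^r 1/i`, as a real number (`H_0 = 0`). -/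
noncomputable def harm (r : ℕ) : ℝ := ∑ i ∈ Finset.range r, (1 : ℝ) / (i + 1)

/-- The span of the columns of `G` indexed by the subset `S ⊆ {1,…,n}`. -/
noncomputable def colSpan (F : Type*) [Field F] {k n : ℕ}
    (G : Matrix (Fin k) (Fin n) F) (S : Finset (Fin n)) : Submodule F (Fin k → F) :=
  Submodule.span F ((fun j => fun i => G i j) '' (S : Set (Fin n)))

/-- `α_V(s)`: the number of `s`-element subsets `S ⊆ {1,…,n}` whose columns span a
subspace containing the target subspace `V`. -/
noncomputable def alphaCount (F : Type*) [Field F] {k n : ℕ}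
    (G : Matrix (Fin k) (Fin n) F) (V : Submodule F (Fin k → F)) (s : ℕ) : ℕ :=
  Nat.card {S : Finset (Fin n) // S.card = s ∧ V ≤ colSpan F G S}

/-- The first file subspace `F₁ = span(e_1, …, e_{s₁}) ⊆ F_q^k`. -/
noncomputable def file1 (F : Type*) [Field F] (k s1 : ℕ) : Submodule F (Fin k → F) :=
  Submodule.span F {v : Fin k → F | ∃ i : Fin k, (i : ℕ) < s1 ∧ v = Pi.single i 1}

/-- The second file subspace `F₂ = span(e_{s₁+1}, …, e_k) ⊆ F_q^k`. -/
noncomputable def file2 (F : Type*) [Field F] (k s1 : ℕ) : Submodule F (Fin k → F) :=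
  Submodule.span F {v : Fin k → F | ∃ i : Fin k, s1 ≤ (i : ℕ) ∧ v = Pi.single i 1}

/-- The expected retrieval time `E(G, V) = n·H_n − ∑_{s=1}^{n−1} α_V(s)/C(n−1,s)`. -/
noncomputable def Etime (F : Type*) [Field F] {k n : ℕ}
    (G : Matrix (Fin k) (Fin n) F) (V : Submodule F (Fin k → F)) : ℝ :=
  (n : ℝ) * harm n -
    ∑ s ∈ Finset.Icc 1 (n - 1), (alphaCount F G V s : ℝ) / ((n - 1).choose s : ℝ)

theorem sum_range_succ_choose_smul {M : Type*} [AddCommMonoid M] (m : ℕ) (f : ℕ → M) :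
    ∑ j ∈ range (m + 2), (m + 1).choose j • f j
      = ∑ j ∈ range (m + 1), m.choose j • (f j + f (j + 1)) := by
  rw [sum_range_succ', sum_range_succ (fun j => (m + 1).choose (j + 1) • f (j + 1))]
  simp only [Nat.choose_succ_succ', add_smul, sum_add_distrib, smul_add, Nat.choose_succ_self,
    add_zero, Nat.choose_zero_right]
  rw [sum_range_succ' (fun j => m.choose j • f j), sum_range_succ (fun j => m.choose j • f (j + 1)),
    Nat.choose_zero_right]
  abel

theorem inv_choose_succ_add_inv_choose_succ_succ {N k : ℕ} (hk : k ≤ N) :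
    ((N + 1).choose k : ℝ)⁻¹ + ((N + 1).choose (k + 1) : ℝ)⁻¹
      = (N + 2) / ((N + 1) * N.choose k) := by
  have h₁ : (N.choose k * (N + 1) : ℝ) = (N + 1).choose k * (N + 1 - k : ℕ) := by
    exact_mod_cast Nat.choose_mul_succ_eq N k
  have h₂ : ((N + 1) * N.choose k : ℝ) = (N + 1).choose (k + 1) * (k + 1) := by
    exact_mod_cast Nat.add_one_mul_choose_eq N k
  have hc : (0 : ℝ) < N.choose k := by exact_mod_cast Nat.choose_pos hk
  have hc₁ : (0 : ℝ) < (N + 1).choose k := by exact_mod_cast Nat.choose_pos (by omega)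
  have hc₂ : (0 : ℝ) < (N + 1).choose (k + 1) := by exact_mod_cast Nat.choose_pos (by omega)
  rw [Nat.cast_sub (by omega)] at h₁
  push_cast at h₁
  rw [inv_add_inv hc₁.ne' hc₂.ne', div_eq_div_iff (by positivity) (by positivity)]
  linear_combination ((N + 1).choose (k + 1) : ℝ) * h₁ + ((N + 1).choose k : ℝ) * h₂

theorem sum_choose_smul_inv_choose_add {b t : ℕ} (ht : t ≤ b) (m : ℕ) :
    ∑ j ∈ range (m + 1), m.choose j • ((b + m).choose (t + j) : ℝ)⁻¹
      = (b + m + 1) / ((b + 1) * b.choose t) := by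
  have hc : (0 : ℝ) < b.choose t := by exact_mod_cast Nat.choose_pos ht
  induction m with
  | zero =>
    simp only [zero_add, range_one, sum_singleton, Nat.choose_self, add_zero, one_smul,
      Nat.cast_zero]
    field_simp
  | succ m ih =>
    have hpascal : ∀ j ∈ range (m + 1),
        ((b + (m + 1)).choose (t + j) : ℝ)⁻¹ + ((b + (m + 1)).choose (t + (j + 1)) : ℝ)⁻¹
          = (b + m + 2) / (b + m + 1) * ((b + m).choose (t + j) : ℝ)⁻¹ := by
      intro j hj
      rw [mem_range] at hj
      rw [← add_assoc, ← add_assoc, inv_choose_succ_add_inv_choose_succ_succ (by omega)]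
      push_cast
      field_simp
    rw [sum_range_succ_choose_smul,
      sum_congr rfl fun j hj => by rw [hpascal j hj, ← mul_smul_comm], ← mul_sum, ih]
    push_cast
    field_simp
    ring

section Subsets

variable {ι : Type*} [Fintype ι] [DecidableEq ι]

theorem sum_filter_card_inter_eq {M : Type*} [AddCommMonoid M] (A : Finset ι) (t : ℕ)
    (f : ℕ → M) :
    ∑ S with #(S ∩ A) = t, f #S
      = (#A).choose t • ∑ j ∈ range (#Aᶜ + 1), (#Aᶜ).choose j • f (t + j) := by
  have hsplit : ∑ S with #(S ∩ A) = t, f #S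
      = ∑ P ∈ powersetCard t A, ∑ Q ∈ Aᶜ.powerset, f (#P + #Q) := by
    have hrecover : ∀ {P Q : Finset ι}, P ⊆ A → Q ⊆ Aᶜ → (P ∪ Q) ∩ A = P ∧ (P ∪ Q) \ A = Q := by
      intro P Q hP hQ
      have hQA : Disjoint Q A := subset_compl_iff_disjoint_right.1 hQ
      rw [union_inter_distrib_right, inter_eq_left.2 hP, disjoint_iff_inter_eq_empty.1 hQA,
        union_empty, union_sdiff_distrib, sdiff_eq_empty_iff_subset.2 hP,
        sdiff_eq_self_of_disjoint hQA, empty_union]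
      exact ⟨rfl, rfl⟩
    rw [← sum_product']
    refine sum_nbij' (fun S => (S ∩ A, S \ A)) (fun p => p.1 ∪ p.2) ?_ ?_ ?_ ?_ ?_
    · intro S hS
      simp only [mem_filter, mem_univ, true_and] at hS
      simp only [mem_product, mem_powersetCard, mem_powerset]
      exact ⟨⟨inter_subset_right, hS⟩, sdiff_eq_inter_compl S A ▸ inter_subset_right⟩
    · rintro ⟨P, Q⟩ hPQ
      simp only [mem_product, mem_powersetCard, mem_powerset] at hPQ
      obtain ⟨⟨hP, rfl⟩, hQ⟩ := hPQ
      simp [(hrecover hP hQ).1]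
    · intro S _
      exact sup_inf_sdiff S A
    · rintro ⟨P, Q⟩ hPQ
      simp only [mem_product, mem_powersetCard, mem_powerset] at hPQ
      obtain ⟨hint, hdiff⟩ := hrecover hPQ.1.1 hPQ.2
      exact Prod.ext hint hdiff
    · intro S _
      rw [card_inter_add_card_sdiff]
  rw [hsplit, sum_congr rfl fun P hP => by rw [(mem_powersetCard.1 hP).2], sum_const,
    card_powersetCard, sum_powerset_apply_card (fun q => f (t + q))]

theorem sum_filter_card_inter_eq_inv_choose (A : Finset ι) {t : ℕ} (ht : t < #A) :
    ∑ S with #(S ∩ A) = t, ((Fintype.card ι - 1).choose #S : ℝ)⁻¹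
      = (Fintype.card ι : ℝ) / (#A - t) := by
  obtain ⟨b, hb⟩ : ∃ b, #A = b + 1 := ⟨#A - 1, by omega⟩
  have hcard : Fintype.card ι = b + 1 + #Aᶜ := by rw [← card_add_card_compl A, hb]
  have hchoose : (b.choose t * (b + 1) : ℝ) = (b + 1).choose t * (b + 1 - t : ℕ) := by
    exact_mod_cast Nat.choose_mul_succ_eq b t
  push_cast [Nat.cast_sub (show t ≤ b + 1 by omega)] at hchoose
  have hc : (0 : ℝ) < b.choose t := by exact_mod_cast Nat.choose_pos (by omega)
  rw [sum_filter_card_inter_eq A t fun s => ((Fintype.card ι - 1).choose s : ℝ)⁻¹, hcard,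
    show b + 1 + #Aᶜ - 1 = b + #Aᶜ by omega, sum_choose_smul_inv_choose_add (by omega), hb,
    nsmul_eq_mul]
  have hden : (b + 1 - t : ℝ) ≠ 0 := by
    have : (t : ℝ) < b + 1 := by exact_mod_cast (show t < b + 1 by omega)
    linarith
  push_cast
  field_simp
  linear_combination (-(b + #Aᶜ + 1 : ℝ)) * hchoose

theorem sum_filter_card_inter_lt_inv_choose (A : Finset ι) {r : ℕ} (hr : r ≤ #A) :
    ∑ S with #(S ∩ A) < r, ((Fintype.card ι - 1).choose #S : ℝ)⁻¹
      = ∑ t ∈ range r, (Fintype.card ι : ℝ) / (#A - t) := by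
  rw [← sum_fiberwise_of_maps_to (g := fun S : Finset ι => #(S ∩ A)) (t := range r)
    (fun S hS => mem_range.2 (mem_filter.1 hS).2)]
  refine sum_congr rfl fun t ht => ?_
  rw [mem_range] at ht
  rw [filter_filter, ← sum_filter_card_inter_eq_inv_choose A (by omega)]
  congr 1
  exact filter_congr fun S _ => ⟨And.right, fun h => ⟨h ▸ ht, h⟩⟩

end Subsets

theorem mul_harm_eq_sum_range (n : ℕ) : n * harm n = ∑ s ∈ range n, (n : ℝ) / (n - s) := by
  rw [harm, mul_sum, ← sum_range_reflect]
  refine sum_congr rfl fun s hs => ?_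
  rw [Nat.cast_sub (by rw [mem_range] at hs; omega), Nat.cast_sub (by rw [mem_range] at hs; omega)]
  push_cast
  field_simp
  ring

theorem sum_inv_choose_pred_card_eq_mul_harm {ι : Type*} [Fintype ι] [DecidableEq ι]
    [Nonempty ι] :
    ∑ S : Finset ι, ((Fintype.card ι - 1).choose #S : ℝ)⁻¹
      = Fintype.card ι * harm (Fintype.card ι) := by
  have hproper := sum_filter_card_inter_lt_inv_choose (univ : Finset ι) le_rfl
  simp only [inter_univ, card_univ] at hproper
  -- the full set carries the junk weight `((card ι - 1).choose (card ι))⁻¹ = 0⁻¹ = 0`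
  have hfull :
      ∑ S : Finset ι with ¬ #S < Fintype.card ι, ((Fintype.card ι - 1).choose #S : ℝ)⁻¹ = 0 := by
    refine sum_eq_zero fun S hS => ?_
    have hS : #S = Fintype.card ι := le_antisymm (card_le_univ S) (not_lt.1 (mem_filter.1 hS).2)
    rw [hS, Nat.choose_eq_zero_of_lt (Nat.sub_lt Fintype.card_pos one_pos), Nat.cast_zero,
      inv_zero]
  rw [← sum_filter_add_sum_filter_not univ (fun S : Finset ι => #S < Fintype.card ι), hproper,
    hfull, add_zero, mul_harm_eq_sum_range]

section Retrieval

variable {F : Type*} [Field F] {k n : ℕ} (G : Matrix (Fin k) (Fin n) F)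
  (V : Submodule F (Fin k → F))

open Classical in
theorem sum_alphaCount_div_choose_le :
    ∑ s ∈ Icc 1 (n - 1), (alphaCount F G V s : ℝ) / ((n - 1).choose s : ℝ)
      ≤ ∑ S with V ≤ colSpan F G S, ((n - 1).choose #S : ℝ)⁻¹ := by
  have hfiber : ∀ s, ∑ S ∈ {S | V ≤ colSpan F G S} with #S = s, ((n - 1).choose #S : ℝ)⁻¹
      = (alphaCount F G V s : ℝ) / ((n - 1).choose s : ℝ) := by
    intro s
    rw [sum_congr rfl fun S hS => by rw [(mem_filter.1 hS).2], sum_const, nsmul_eq_mul,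
      div_eq_mul_inv, alphaCount, Nat.card_eq_fintype_card, Fintype.card_subtype, filter_filter]
    simp only [and_comm]
  rw [← sum_fiberwise_of_maps_to (g := fun S : Finset (Fin n) => #S) (t := range (n + 1))
    fun S _ => mem_range.2 (Nat.lt_succ_of_le (by simpa using card_le_univ S))]
  simp only [hfiber]
  exact sum_le_sum_of_subset_of_nonneg
    (fun s hs => by simp only [mem_Icc, mem_range] at hs ⊢; omega) fun _ _ _ => by positivity

open Classical in
theorem sum_filter_not_le_colSpan_le_Etime (hn : n ≠ 0) :
    ∑ S with ¬ V ≤ colSpan F G S, ((n - 1).choose #S : ℝ)⁻¹ ≤ Etime F G V := by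
  have : NeZero n := ⟨hn⟩
  have htotal := sum_inv_choose_pred_card_eq_mul_harm (ι := Fin n)
  rw [Fintype.card_fin, ← sum_filter_add_sum_filter_not univ fun S => V ≤ colSpan F G S] at htotal
  have := sum_alphaCount_div_choose_le G V
  rw [Etime]
  linarith

theorem mul_div_card_le_Etime (A : Finset (Fin n)) {r : ℕ} (hr₀ : r ≠ 0) (hr : r ≤ #A)
    (hspan : ∀ S, V ≤ colSpan F G S → r ≤ #(S ∩ A)) :
    n * r / #A ≤ Etime F G V := by
  classical
  have hn : n ≠ 0 := by have := card_le_univ A; rw [Fintype.card_fin] at this; omega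
  calc (n : ℝ) * r / #A = ∑ _t ∈ range r, (n : ℝ) / #A := by
        rw [sum_const, card_range, nsmul_eq_mul]; ring
    _ ≤ ∑ t ∈ range r, (n : ℝ) / (#A - t) := by
        refine sum_le_sum fun t ht => div_le_div_of_nonneg_left (by positivity) ?_ ?_
        · have : (t : ℝ) < #A := by exact_mod_cast (show t < #A by rw [mem_range] at ht; omega)
          linarith
        · linarith [(Nat.cast_nonneg t : (0 : ℝ) ≤ t)]
    _ = ∑ S with #(S ∩ A) < r, ((n - 1).choose #S : ℝ)⁻¹ := by
        have h := sum_filter_card_inter_lt_inv_choose A hr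
        rw [Fintype.card_fin] at h
        exact h.symm
    _ ≤ ∑ S with ¬ V ≤ colSpan F G S, ((n - 1).choose #S : ℝ)⁻¹ :=
        sum_le_sum_of_subset_of_nonneg
          (monotone_filter_right _ fun S _ hlt hV => (hspan S hV).not_gt hlt)
          fun _ _ _ => by positivity
    _ ≤ Etime F G V := sum_filter_not_le_colSpan_le_Etime G V hn

theorem div_Etime_le (A : Finset (Fin n)) {r : ℕ} (hr : r ≤ #A)
    (hspan : ∀ S, V ≤ colSpan F G S → r ≤ #(S ∩ A)) :
    r / Etime F G V ≤ #A / n := by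
  rcases Nat.eq_zero_or_pos r with rfl | hr₀
  · simp only [Nat.cast_zero, zero_div]
    positivity
  have hn : 0 < n := by have := card_le_univ A; rw [Fintype.card_fin] at this; omega
  have hE := mul_div_card_le_Etime G V A hr₀.ne' hr hspan
  have hpos : (0 : ℝ) < n * r / #A := by
    have : 0 < #A := by omega
    positivity
  calc (r : ℝ) / Etime F G V ≤ r / (n * r / #A) :=
        div_le_div_of_nonneg_left (by positivity) hpos hE
    _ = #A / n := by field_simp

end Retrieval

section StdSpan

variable (F : Type*) [Field F] {ι : Type*} [DecidableEq ι]

def stdSpan (p : ι → Prop) : Submodule F (ι → F) :=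
  Submodule.span F {v | ∃ i, p i ∧ v = Pi.single i 1}

variable {F}

theorem apply_eq_zero_of_mem_stdSpan {p : ι → Prop} {v : ι → F} (hv : v ∈ stdSpan F p) {i : ι}
    (hi : ¬ p i) : v i = 0 := by
  induction hv using Submodule.span_induction with
  | mem v hv =>
    obtain ⟨j, hj, rfl⟩ := hv
    exact Pi.single_eq_of_ne (by rintro rfl; exact hi hj) 1
  | zero => rfl
  | add x y _ _ hx hy => simp [hx, hy]
  | smul c x _ hx => simp [hx]

theorem disjoint_stdSpan {p q : ι → Prop} (h : ∀ i, p i → ¬ q i) :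
    Disjoint (stdSpan F p) (stdSpan F q) := by
  rw [Submodule.disjoint_def]
  intro v hp hq
  funext i
  by_cases hi : p i
  · exact apply_eq_zero_of_mem_stdSpan hq (h i hi)
  · exact apply_eq_zero_of_mem_stdSpan hp hi

theorem finrank_stdSpan [Fintype ι] (p : ι → Prop) [DecidablePred p] :
    Module.finrank F (stdSpan F p) = #{i | p i} := by
  have hrange : {v | ∃ i, p i ∧ v = Pi.single i (1 : F)}
      = Set.range (Pi.basisFun F ι ∘ (Subtype.val : {i // p i} → ι)) := by
    ext v
    simp [Pi.basisFun_apply, eq_comm]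
  rw [stdSpan, hrange, finrank_span_eq_card
    ((Pi.basisFun F ι).linearIndependent.comp _ Subtype.val_injective), Fintype.card_subtype]

end StdSpan

theorem finrank_file1 {F : Type*} [Field F] {k s1 : ℕ} (hs1 : s1 ≤ k) :
    Module.finrank F (file1 F k s1) = s1 := by
  rw [show file1 F k s1 = stdSpan F fun i : Fin k => (i : ℕ) < s1 from rfl, finrank_stdSpan,
    Fin.card_filter_val_lt, min_eq_right hs1]

theorem finrank_file2 {F : Type*} [Field F] {k s1 s2 : ℕ} (hk : s1 + s2 = k) :
    Module.finrank F (file2 F k s1) = s2 := by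
  have hsplit := card_filter_add_card_filter_not (s := (univ : Finset (Fin k)))
    fun i => (i : ℕ) < s1
  simp only [Fin.card_filter_val_lt, not_lt, card_univ, Fintype.card_fin] at hsplit
  rw [show file2 F k s1 = stdSpan F fun i : Fin k => s1 ≤ (i : ℕ) from rfl, finrank_stdSpan]
  omega

theorem disjoint_file1_file2 {F : Type*} [Field F] {k s1 : ℕ} :
    Disjoint (file1 F k s1) (file2 F k s1) :=
  disjoint_stdSpan fun _ h₁ h₂ => (not_le.2 h₁) h₂

theorem finrank_le_card_inter_of_le_span_image {F M ι : Type*} [DivisionRing F] [AddCommGroup M]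
    [Module F M] [DecidableEq ι] (v : ι → M) {V W : Submodule F M} (hVW : Disjoint V W)
    {A : Finset ι} (hA : ∀ j ∈ A, v j ∈ V) (hAc : ∀ j ∉ A, v j ∈ W) {S : Finset ι}
    (hS : V ≤ Submodule.span F (v '' S)) :
    Module.finrank F V ≤ #(S ∩ A) := by
  classical
  have hle : Submodule.span F (v '' ↑(S ∩ A)) ≤ V :=
    Submodule.span_le.2 <| Set.image_subset_iff.2 fun j hj => hA j (mem_inter.1 hj).2
  have hsup : V ≤ Submodule.span F (v '' ↑(S ∩ A)) ⊔ W := by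
    refine hS.trans <| Submodule.span_le.2 <| Set.image_subset_iff.2 fun j hj => ?_
    by_cases hjA : j ∈ A
    · exact Submodule.mem_sup_left <| Submodule.subset_span ⟨j, mem_inter.2 ⟨hj, hjA⟩, rfl⟩
    · exact Submodule.mem_sup_right (hAc j hjA)
  -- modular law: as `V ⊓ W = ⊥`, `V` is the span of the vectors indexed by `S ∩ A`
  rw [← eq_of_le_of_inf_le_of_le_sup hle (hVW.eq_bot ▸ bot_le) hsup, ← coe_image]
  exact (finrank_span_finset_le_card _).trans card_image_le

theorem colSpan_univ_eq_top {F : Type*} [Field F] {k n : ℕ} (G : Matrix (Fin k) (Fin n) F)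
    (hrank : G.rank = k) : colSpan F G univ = ⊤ := by
  apply Submodule.eq_top_of_finrank_eq
  rw [colSpan, coe_univ, Set.image_univ, Module.finrank_fin_fun]
  exact (G.rank_eq_finrank_span_cols).symm.trans hrank

theorem finrank_div_Etime_le {F : Type*} [Field F] {k n : ℕ} (G : Matrix (Fin k) (Fin n) F)
    (htop : colSpan F G univ = ⊤) {V W : Submodule F (Fin k → F)} (hVW : Disjoint V W)
    (A : Finset (Fin n)) (hA : ∀ j ∈ A, (fun i => G i j) ∈ V)
    (hAc : ∀ j ∉ A, (fun i => G i j) ∈ W) :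
    (Module.finrank F V : ℝ) / Etime F G V ≤ #A / n := by
  have hspan : ∀ S, V ≤ colSpan F G S → Module.finrank F V ≤ #(S ∩ A) :=
    fun _ hS => finrank_le_card_inter_of_le_span_image _ hVW hA hAc hS
  refine div_Etime_le G V A ?_ hspan
  simpa using hspan univ (htop ▸ le_top)

theorem stmt10_general (k n s1 s2 : ℕ)
    (F : Type*) [Field F]
    (G : Matrix (Fin k) (Fin n) F) (hrank : G.rank = k)
    (hk : s1 + s2 = k)
    (hpure : ∀ j : Fin n, (fun i => G i j) ∈ file1 F k s1 ∨ (fun i => G i j) ∈ file2 F k s1) :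
    (s1 : ℝ) / Etime F G (file1 F k s1) + (s2 : ℝ) / Etime F G (file2 F k s1) ≤ 1 := by
  classical
  set A : Finset (Fin n) := {j | (fun i => G i j) ∈ file1 F k s1}
  have hA : ∀ j ∈ A, (fun i => G i j) ∈ file1 F k s1 := fun j hj => (mem_filter.1 hj).2
  have hAc : ∀ j ∉ A, (fun i => G i j) ∈ file2 F k s1 := fun j hj =>
    (hpure j).resolve_left fun h => hj (mem_filter.2 ⟨mem_univ j, h⟩)
  have htop := colSpan_univ_eq_top G hrank
  have h₁ := finrank_div_Etime_le G htop disjoint_file1_file2 A hA hAc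
  have h₂ := finrank_div_Etime_le G htop disjoint_file1_file2.symm Aᶜ
    (fun j hj => hAc j (mem_compl.1 hj)) fun j hj => hA j (notMem_compl.1 hj)
  rw [finrank_file1 (by omega)] at h₁
  rw [finrank_file2 hk] at h₂
  calc _ ≤ (#A : ℝ) / n + #Aᶜ / n := add_le_add h₁ h₂
    _ ≤ 1 := by
      rw [← add_div, ← Nat.cast_add, card_add_card_compl, Fintype.card_fin]
      exact div_self_le_one _

/-- The hyperbolic bound for pure-file codes: if every column of `G` lies entirely in
`F₁` or in `F₂`, then `s₁/E₁(G) + s₂/E₂(G) ≤ 1`. -/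
theorem stmt10 (q k n s1 s2 : ℕ) (hq : IsPrimePow q)
    (F : Type*) [Field F] [Fintype F] (hF : Fintype.card F = q)
    (G : Matrix (Fin k) (Fin n) F) (hrank : G.rank = k)
    (hs1 : 1 ≤ s1) (hs2 : 1 ≤ s2) (hk : s1 + s2 = k)
    (hpure : ∀ j : Fin n, (fun i => G i j) ∈ file1 F k s1 ∨ (fun i => G i j) ∈ file2 F k s1) :
    (s1 : ℝ) / Etime F G (file1 F k s1) + (s2 : ℝ) / Etime F G (file2 F k s1) ≤ 1 :=
  stmt10_general k n s1 s2 F G hrank hk hpure
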